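/- Let k ∈ ℝ. Consider the Hamiltonian H(L, Θ, P_L, P_Θ) = (1/2)(P_L²/4 + P_Θ²/L²) + L²(k/2 + 1 − cos Θ) on the phase space {L > 0} × ℝ³, with Hamilton's equations L' = P_L/4, Θ' = P_Θ/L², P_L' = P_Θ²/L³ − 2L(k/2 + 1 − cos Θ), P_Θ' = −L² sin Θ. Then the function F(L, Θ, P_L, P_Θ) = (P_L²/4 − P_Θ²/L²)cos Θ − (sin Θ/L)·P_L·P_Θ + L²(k cos Θ − 4 sin²(Θ/2)) is a first integral: for every differentiable solution (L(t), Θ(t), P_L(t), P_Θ(t)) of Hamilton's equations with L(t) > 0, the function t ↦ F(L(t), Θ(t), P_L(t), P_Θ(t)) is constant. -/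

import Mathlib

/-!
`F` Poisson-commutes with `H`: along a solution, `d/dt F = dF(X_H)`, and after writing
`4 sin² (Θ/2) = 2 (1 - cos Θ)` this is a rational identity in `L, P_L, P_Θ, cos Θ, sin Θ`
that vanishes modulo `sin² Θ + cos² Θ = 1`.
-/

/-- The additional first integral F of the reduced zero-gravity coupled pendulum
with m = 4 and f = 0. -/
noncomputable def pendF (k L Θ PL PΘ : ℝ) : ℝ :=
  (PL ^ 2 / 4 - PΘ ^ 2 / L ^ 2) * Real.cos Θ - (Real.sin Θ / L) * PL * PΘ
    + L ^ 2 * (k * Real.cos Θ - 4 * Real.sin (Θ / 2) ^ 2)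

open Real

lemma four_mul_sin_half_sq (x : ℝ) : 4 * sin (x / 2) ^ 2 = 2 * (1 - cos x) := by
  have h := cos_two_mul_eq_one_sub (x / 2)
  rw [mul_div_cancel₀ x two_ne_zero] at h
  linarith

lemma pendF_eq_cos (k L Θ PL PΘ : ℝ) :
    pendF k L Θ PL PΘ = (PL ^ 2 / 4 - PΘ ^ 2 / L ^ 2) * cos Θ - sin Θ / L * PL * PΘ
      + L ^ 2 * ((k + 2) * cos Θ - 2) := by
  rw [pendF, four_mul_sin_half_sq]; ring

/-- The differential of `pendF k` at `(L, Θ, PL, PΘ)`, applied to the tangent vector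
`(L', Θ', PL', PΘ')`. -/
noncomputable def pendFDeriv (k L Θ PL PΘ L' Θ' PL' PΘ' : ℝ) : ℝ :=
  (2 * PΘ ^ 2 / L ^ 3 * cos Θ + sin Θ * PL * PΘ / L ^ 2 + 2 * L * ((k + 2) * cos Θ - 2)) * L'
    - ((PL ^ 2 / 4 - PΘ ^ 2 / L ^ 2) * sin Θ + cos Θ * PL * PΘ / L
      + (k + 2) * L ^ 2 * sin Θ) * Θ'
    + (PL / 2 * cos Θ - sin Θ * PΘ / L) * PL'
    - (2 * PΘ / L ^ 2 * cos Θ + sin Θ * PL / L) * PΘ'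

theorem HasDerivAt.pendF_comp {k t L' Θ' PL' PΘ' : ℝ} {L Θ PL PΘ : ℝ → ℝ} (hL0 : L t ≠ 0)
    (hL : HasDerivAt L L' t) (hΘ : HasDerivAt Θ Θ' t) (hPL : HasDerivAt PL PL' t)
    (hPΘ : HasDerivAt PΘ PΘ' t) :
    HasDerivAt (fun t => pendF k (L t) (Θ t) (PL t) (PΘ t))
      (pendFDeriv k (L t) (Θ t) (PL t) (PΘ t) L' Θ' PL' PΘ') t := by
  simp only [pendF_eq_cos]
  have hcos := hΘ.cos
  have hkin := (((hPL.fun_pow 2).div_const 4).sub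
    ((hPΘ.fun_pow 2).fun_div (hL.fun_pow 2) (pow_ne_zero 2 hL0))).mul hcos
  have hmix := ((hΘ.sin.fun_div hL hL0).mul hPL).mul hPΘ
  have hpot := (hL.fun_pow 2).mul ((hcos.const_mul (k + 2)).sub_const 2)
  refine ((hkin.sub hmix).add hpot).congr_deriv ?_
  simp only [pendFDeriv, Pi.mul_apply, Pi.sub_apply]
  field_simp
  ring

lemma pendFDeriv_hamiltonian_eq_zero (k : ℝ) {L : ℝ} (hL0 : L ≠ 0) (Θ PL PΘ : ℝ) :
    pendFDeriv k L Θ PL PΘ (PL / 4) (PΘ / L ^ 2)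
      (PΘ ^ 2 / L ^ 3 - 2 * L * (k / 2 + 1 - cos Θ)) (-(L ^ 2) * sin Θ) = 0 := by
  unfold pendFDeriv
  field_simp
  linear_combination 8 * L ^ 5 * PL * sin_sq_add_cos_sq Θ

theorem F_is_first_integral
    (k : ℝ) (L Θ PL PΘ : ℝ → ℝ)
    (hLpos : ∀ t, 0 < L t)
    (hL : ∀ t, HasDerivAt L (PL t / 4) t)
    (hΘ : ∀ t, HasDerivAt Θ (PΘ t / L t ^ 2) t)
    (hPL : ∀ t, HasDerivAt PL
      (PΘ t ^ 2 / L t ^ 3 - 2 * L t * (k / 2 + 1 - Real.cos (Θ t))) t)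
    (hPΘ : ∀ t, HasDerivAt PΘ (-(L t ^ 2) * Real.sin (Θ t)) t) :
    ∀ t₁ t₂ : ℝ, pendF k (L t₁) (Θ t₁) (PL t₁) (PΘ t₁)
      = pendF k (L t₂) (Θ t₂) (PL t₂) (PΘ t₂) := by
  have hderiv : ∀ t, HasDerivAt (fun t => pendF k (L t) (Θ t) (PL t) (PΘ t)) 0 t := fun t => by
    simpa only [pendFDeriv_hamiltonian_eq_zero k (hLpos t).ne'] using
      (hL t).pendF_comp (k := k) (hLpos t).ne' (hΘ t) (hPL t) (hPΘ t)
  exact is_const_of_deriv_eq_zero (fun t => (hderiv t).differentiableAt) fun t => (hderiv t).deriv
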